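/- Let X be a finite set and 𝒞 a finite set of clusters on X that is not compatible. Then minlen(𝒞) = min over maximal ST-sets S of 𝒞 of (1 + minlen(𝒞 ∖ S)), where minlen denotes the minimum length of an ST-set tree sequence. -/
import Mathlib


/-- Two clusters are compatible if one contains the other or they are disjoint. -/
def Compatible {α : Type*} [DecidableEq α] (A B : Finset α) : Prop :=
  A ⊆ B ∨ B ⊆ A ∨ A ∩ B = ∅

/-- A set of clusters is compatible if its elements are pairwise compatible. -/
def CompatibleSet {α : Type*} [DecidableEq α] (𝒞 : Finset (Finset α)) : Prop :=
  ∀ A ∈ 𝒞, ∀ B ∈ 𝒞, Compatible A B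

/-- The restriction 𝒞|S = { C ∩ S : C ∈ 𝒞 }. -/
def restrictCl {α : Type*} [DecidableEq α] (𝒞 : Finset (Finset α)) (S : Finset α) :
    Finset (Finset α) :=
  𝒞.image (· ∩ S)

/-- The removal 𝒞 ∖ S = { C \ S : C ∈ 𝒞 }. -/
def removeCl {α : Type*} [DecidableEq α] (𝒞 : Finset (Finset α)) (S : Finset α) :
    Finset (Finset α) :=
  𝒞.image (· \ S)

/-- S is an ST-set of 𝒞: S is compatible with every cluster of 𝒞 and 𝒞|S is compatible. -/
def IsSTSet {α : Type*} [DecidableEq α] (𝒞 : Finset (Finset α)) (S : Finset α) : Prop :=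
  (∀ C ∈ 𝒞, Compatible S C) ∧ CompatibleSet (restrictCl 𝒞 S)

/-- S is a maximal ST-set of 𝒞: an ST-set that is not a proper subset of any other ST-set. -/
def IsMaxSTSet {α : Type*} [DecidableEq α] (𝒞 : Finset (Finset α)) (S : Finset α) : Prop :=
  IsSTSet 𝒞 S ∧ ∀ T : Finset α, IsSTSet 𝒞 T → ¬ S ⊂ T

/-- The cluster set obtained after removing, in order, the sets of the list L. -/
def afterSeq {α : Type*} [DecidableEq α] (𝒞 : Finset (Finset α)) :
    List (Finset α) → Finset (Finset α)
  | [] => 𝒞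
  | S :: L => afterSeq (removeCl 𝒞 S) L

/-- L = S₁, …, S_k is an ST-set sequence for 𝒞: each S_i is an ST-set of 𝒞_{i-1}. -/
def IsSTSeq {α : Type*} [DecidableEq α] (𝒞 : Finset (Finset α)) : List (Finset α) → Prop
  | [] => True
  | S :: L => IsSTSet 𝒞 S ∧ IsSTSeq (removeCl 𝒞 S) L

/-- A tree sequence: an ST-set sequence whose final cluster set is compatible. -/
def IsTreeSeq {α : Type*} [DecidableEq α] (𝒞 : Finset (Finset α)) (L : List (Finset α)) : Prop :=
  IsSTSeq 𝒞 L ∧ CompatibleSet (afterSeq 𝒞 L)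

/-- The minimum length of an ST-set tree sequence for 𝒞. -/
noncomputable def minlen {α : Type*} [DecidableEq α] (𝒞 : Finset (Finset α)) : ℕ :=
  sInf {k : ℕ | ∃ L : List (Finset α), IsTreeSeq 𝒞 L ∧ L.length = k}

section Aux

variable {α : Type*} [DecidableEq α]

lemma compatible_sdiff {A B : Finset α} (S : Finset α) (h : Compatible A B) :
    Compatible (A \ S) (B \ S) := by
  rcases h with h | h | h
  · exact Or.inl (Finset.sdiff_subset_sdiff h (le_refl _))
  · exact Or.inr (Or.inl (Finset.sdiff_subset_sdiff h (le_refl _)))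
  · refine Or.inr (Or.inr ?_)
    ext a
    simp only [Finset.mem_inter, Finset.mem_sdiff, Finset.notMem_empty, iff_false]
    rintro ⟨⟨ha, _⟩, hb, _⟩
    have := Finset.eq_empty_iff_forall_notMem.mp h a
    simp [Finset.mem_inter, ha, hb] at this

lemma compatibleSet_image_sdiff {𝒞 : Finset (Finset α)} (h : CompatibleSet 𝒞) (S : Finset α) :
    CompatibleSet (𝒞.image (· \ S)) := by
  intro A hA B hB
  simp only [Finset.mem_image] at hA hB
  obtain ⟨A', hA', rfl⟩ := hA
  obtain ⟨B', hB', rfl⟩ := hB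
  exact compatible_sdiff S (h A' hA' B' hB')

lemma compatibleSet_remove {𝒞 : Finset (Finset α)} (h : CompatibleSet 𝒞) (S : Finset α) :
    CompatibleSet (removeCl 𝒞 S) := compatibleSet_image_sdiff h S

lemma restrict_remove (𝒞 : Finset (Finset α)) (S U : Finset α) :
    restrictCl (removeCl 𝒞 S) (U \ S) = (restrictCl 𝒞 U).image (· \ S) := by
  unfold restrictCl removeCl
  rw [Finset.image_image, Finset.image_image]
  apply Finset.image_congr
  intro C _
  ext a
  simp only [Function.comp_apply, Finset.mem_inter, Finset.mem_sdiff]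
  tauto

lemma isSTSet_remove {𝒞 : Finset (Finset α)} {U : Finset α} (hU : IsSTSet 𝒞 U) (S : Finset α) :
    IsSTSet (removeCl 𝒞 S) (U \ S) := by
  constructor
  · intro C hC
    simp only [removeCl, Finset.mem_image] at hC
    obtain ⟨C', hC', rfl⟩ := hC
    exact compatible_sdiff S (hU.1 C' hC')
  · rw [restrict_remove]
    exact compatibleSet_image_sdiff hU.2 S

lemma remove_remove_comm (𝒞 : Finset (Finset α)) (S U : Finset α) :
    removeCl (removeCl 𝒞 S) (U \ S) = removeCl (removeCl 𝒞 U) (S \ U) := by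
  unfold removeCl
  rw [Finset.image_image, Finset.image_image]
  apply Finset.image_congr
  intro C _
  ext a
  simp only [Function.comp_apply, Finset.mem_sdiff, not_and, not_not]
  tauto

/-- Removing an ST-set does not increase the minimum tree-sequence length. -/
lemma monotone_remove {𝒞 : Finset (Finset α)} {U : Finset α} {L : List (Finset α)}
    (hL : IsTreeSeq 𝒞 L) (hU : IsSTSet 𝒞 U) :
    ∃ L', IsTreeSeq (removeCl 𝒞 U) L' ∧ L'.length ≤ L.length := by
  induction L generalizing 𝒞 U with
  | nil => exact ⟨[], ⟨trivial, compatibleSet_remove hL.2 U⟩, le_refl _⟩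
  | cons S L₁ ih =>
    obtain ⟨⟨hS, hSeq⟩, hcomp⟩ := hL
    have hU' : IsSTSet (removeCl 𝒞 S) (U \ S) := isSTSet_remove hU S
    obtain ⟨L', hL', hlen⟩ := ih ⟨hSeq, hcomp⟩ hU'
    rw [remove_remove_comm] at hL'
    exact ⟨(S \ U) :: L', ⟨⟨isSTSet_remove hS U, hL'.1⟩, hL'.2⟩,
      by simpa using Nat.succ_le_succ hlen⟩

lemma singleton_STSet (𝒞 : Finset (Finset α)) (x : α) : IsSTSet 𝒞 {x} := by
  constructor
  · intro C hC
    by_cases hx : x ∈ C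
    · exact Or.inl (Finset.singleton_subset_iff.mpr hx)
    · refine Or.inr (Or.inr ?_)
      ext a
      simp only [Finset.mem_inter, Finset.mem_singleton, Finset.notMem_empty, iff_false]
      rintro ⟨rfl, ha⟩
      exact hx ha
  · intro A hA B hB
    simp only [restrictCl, Finset.mem_image] at hA hB
    obtain ⟨A', _, rfl⟩ := hA
    obtain ⟨B', _, rfl⟩ := hB
    have h1 := Finset.subset_singleton_iff.mp (Finset.inter_subset_right : A' ∩ {x} ⊆ {x})
    have h2 := Finset.subset_singleton_iff.mp (Finset.inter_subset_right : B' ∩ {x} ⊆ {x})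
    rcases h1 with h1 | h1 <;> rcases h2 with h2 | h2 <;> simp [Compatible, h1, h2]

lemma empty_STSet (𝒞 : Finset (Finset α)) : IsSTSet 𝒞 (∅ : Finset α) := by
  constructor
  · intro C _
    exact Or.inl (Finset.empty_subset C)
  · intro A hA B hB
    simp only [restrictCl, Finset.mem_image] at hA
    obtain ⟨A', _, rfl⟩ := hA
    exact Or.inl (by simp)

lemma exists_treeSeq_aux (l : List α) : ∀ (𝒞 : Finset (Finset α)),
    (∀ C ∈ 𝒞, C ⊆ l.toFinset) →
      IsTreeSeq 𝒞 (l.map (fun x => ({x} : Finset α))) := by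
  induction l with
  | nil =>
    intro 𝒞 hsub
    refine ⟨trivial, ?_⟩
    intro A hA B hB
    have : A = ∅ := Finset.subset_empty.mp (by simpa using hsub A hA)
    exact Or.inl (this ▸ Finset.empty_subset B)
  | cons x l ih =>
    intro 𝒞 hsub
    have h' : ∀ C ∈ removeCl 𝒞 {x}, C ⊆ l.toFinset := by
      intro C hC
      simp only [removeCl, Finset.mem_image] at hC
      obtain ⟨C', hC', rfl⟩ := hC
      intro a ha
      rcases Finset.mem_sdiff.mp ha with ⟨haC, hax⟩
      have := hsub C' hC' haC
      simp only [List.toFinset_cons, Finset.mem_insert, List.mem_toFinset] at this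
      rcases this with h0 | h0
      · exact absurd (Finset.mem_singleton.mpr h0) hax
      · exact List.mem_toFinset.mpr h0
    have hrec := ih (removeCl 𝒞 {x}) h'
    exact ⟨⟨singleton_STSet 𝒞 x, hrec.1⟩, hrec.2⟩

lemma treeSeq_exists [Fintype α] (𝒞 : Finset (Finset α)) :
    ∃ L : List (Finset α), IsTreeSeq 𝒞 L :=
  ⟨_, exists_treeSeq_aux Finset.univ.toList 𝒞 (fun C _ a _ => by simp)⟩

lemma exists_maxSTSet_ge [Fintype α] (𝒞 : Finset (Finset α)) (S : Finset α)
    (hS : IsSTSet 𝒞 S) : ∃ T, IsMaxSTSet 𝒞 T ∧ S ⊆ T := by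
  classical
  let P : Finset (Finset α) := Finset.univ.filter (fun T => IsSTSet 𝒞 T ∧ S ⊆ T)
  have hne : P.Nonempty := ⟨S, by simp [P, hS]⟩
  obtain ⟨T, hT, hmax⟩ := P.exists_max_image Finset.card hne
  simp only [P, Finset.mem_filter, Finset.mem_univ, true_and] at hT
  refine ⟨T, ⟨hT.1, ?_⟩, hT.2⟩
  intro T' hT' hss
  have hmem : T' ∈ P := by
    simp only [P, Finset.mem_filter, Finset.mem_univ, true_and]
    exact ⟨hT', hT.2.trans hss.subset⟩
  exact absurd (Finset.card_lt_card hss) (not_lt.mpr (hmax T' hmem))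

end Aux

/-- if 𝒞 is not compatible then
minlen 𝒞 = min over maximal ST-sets S of 𝒞 of (1 + minlen (𝒞 ∖ S)). -/
theorem minlen_eq_min_over_maxSTSets {α : Type*} [Fintype α] [DecidableEq α]
    (𝒞 : Finset (Finset α)) (h : ¬ CompatibleSet 𝒞) :
    minlen 𝒞 = sInf {m : ℕ | ∃ S : Finset α, IsMaxSTSet 𝒞 S ∧ m = 1 + minlen (removeCl 𝒞 S)} := by
  classical
  have hLex : ∀ (𝒟 : Finset (Finset α)),
      {k : ℕ | ∃ L : List (Finset α), IsTreeSeq 𝒟 L ∧ L.length = k}.Nonempty := by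
    intro 𝒟
    obtain ⟨L, hL⟩ := treeSeq_exists 𝒟
    exact ⟨L.length, L, hL, rfl⟩
  have hopt : ∀ (𝒟 : Finset (Finset α)),
      ∃ L : List (Finset α), IsTreeSeq 𝒟 L ∧ L.length = minlen 𝒟 := by
    intro 𝒟
    exact Nat.sInf_mem (hLex 𝒟)
  obtain ⟨T₀, hT₀, _⟩ := exists_maxSTSet_ge 𝒞 ∅ (empty_STSet 𝒞)
  have hRHSne : {m : ℕ | ∃ S : Finset α, IsMaxSTSet 𝒞 S ∧
      m = 1 + minlen (removeCl 𝒞 S)}.Nonempty := ⟨_, T₀, hT₀, rfl⟩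
  apply le_antisymm
  · obtain ⟨S, hS, hm⟩ := Nat.sInf_mem hRHSne
    rw [hm]
    obtain ⟨L, hL, hlen⟩ := hopt (removeCl 𝒞 S)
    have htree : IsTreeSeq 𝒞 (S :: L) := ⟨⟨hS.1, hL.1⟩, hL.2⟩
    have hle : minlen 𝒞 ≤ (S :: L).length := Nat.sInf_le ⟨S :: L, htree, rfl⟩
    simpa [List.length_cons, hlen, Nat.add_comm] using hle
  · obtain ⟨L, hL, hlen⟩ := hopt 𝒞
    cases L with
    | nil => exact absurd hL.2 h
    | cons S L₁ =>
      obtain ⟨⟨hS, hSeq⟩, hcomp⟩ := hL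
      obtain ⟨T, hT, hST⟩ := exists_maxSTSet_ge 𝒞 S hS
      have hUst : IsSTSet (removeCl 𝒞 S) (T \ S) := isSTSet_remove hT.1 S
      obtain ⟨L', hL', hlen'⟩ := monotone_remove (𝒞 := removeCl 𝒞 S) ⟨hSeq, hcomp⟩ hUst
      have heq : removeCl (removeCl 𝒞 S) (T \ S) = removeCl 𝒞 T := by
        unfold removeCl
        rw [Finset.image_image]
        apply Finset.image_congr
        intro C _
        ext a
        have hst : a ∈ S → a ∈ T := fun ha => hST ha
        simp only [Function.comp_apply, Finset.mem_sdiff, not_and, not_not]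
        tauto
      rw [heq] at hL'
      have h1 : minlen (removeCl 𝒞 T) ≤ L₁.length :=
        le_trans (Nat.sInf_le ⟨L', hL', rfl⟩) hlen'
      have h2 : sInf {m : ℕ | ∃ S : Finset α, IsMaxSTSet 𝒞 S ∧
          m = 1 + minlen (removeCl 𝒞 S)} ≤ 1 + minlen (removeCl 𝒞 T) :=
        Nat.sInf_le ⟨T, hT, rfl⟩
      calc sInf {m : ℕ | ∃ S : Finset α, IsMaxSTSet 𝒞 S ∧
              m = 1 + minlen (removeCl 𝒞 S)}
          ≤ 1 + minlen (removeCl 𝒞 T) := h2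
        _ ≤ 1 + L₁.length := by omega
        _ = (S :: L₁).length := by simp [Nat.add_comm]
        _ = minlen 𝒞 := hlen
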